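/- Let $f: X \to \mathbb{R}_{>0}$ be a function on a space $X$ with a self-map $\phi$, and suppose there are constants $C_1 > 1$, $0 < C_0 < 1$, and a locally constant function $z \mapsto n_z \in \{1, \dots, n_{\max}\}$ such that for every $z \in X$: $\prod_{i=0}^{n_z - 1} f(\phi^i(z)) > C_1$ and $f(z) > C_0$ pointwise. Then for every $\lambda \geq 1$ there exists $N \geq 1$ such that for all $z \in X$ and all $n \geq N$: $\prod_{i=0}^{n-1} f(\phi^i(z)) > \lambda$. -/

import Mathlib

/-!
Cut an orbit segment of length `n` greedily into blocks of lengths `nz z ≤ nmax`, each with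
product at least `C₁`, until fewer than `nmax` steps remain; the remainder has product at least
`C₀ ^ nmax`. At least `n / nmax` blocks fit, so the orbit product is at least
`C₁ ^ (n / nmax) * C₀ ^ nmax`, which exceeds `λ` once `n / nmax` is large.
-/

open Finset Function

def birkhoffProd {X M : Type*} [CommMonoid M] (φ : X → X) (f : X → M) (n : ℕ) (x : X) : M :=
  ∏ k ∈ range n, f (φ^[k] x)

section

variable {X R : Type*}

theorem birkhoffProd_add [CommMonoid R] (φ : X → X) (f : X → R) (m n : ℕ) (x : X) :
    birkhoffProd φ f (m + n) x = birkhoffProd φ f m x * birkhoffProd φ f n (φ^[m] x) := by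
  simp_rw [birkhoffProd, prod_range_add, add_comm m, iterate_add_apply]

variable [CommSemiring R] [PartialOrder R] [IsOrderedRing R] {φ : X → X} {f : X → R}

theorem pow_le_birkhoffProd {c : R} (hc : 0 ≤ c) (hf : ∀ x, c ≤ f x) (n : ℕ) (x : X) :
    c ^ n ≤ birkhoffProd φ f n x := by
  simpa [birkhoffProd] using prod_le_prod (s := range n) (fun _ _ => hc) (fun k _ => hf (φ^[k] x))

theorem birkhoffProd_nonneg (hf : ∀ x, 0 ≤ f x) (n : ℕ) (x : X) : 0 ≤ birkhoffProd φ f n x :=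
  prod_nonneg fun _ _ => hf _

theorem pow_div_mul_pow_le_birkhoffProd {nz : X → ℕ} {nmax : ℕ} {C₀ C₁ : R}
    (hC₁ : 1 ≤ C₁) (hC₀ : 0 ≤ C₀) (hC₀' : C₀ ≤ 1)
    (hnz_pos : ∀ z, 1 ≤ nz z) (hnz_le : ∀ z, nz z ≤ nmax)
    (hblock : ∀ z, C₁ ≤ birkhoffProd φ f (nz z) z) (hf : ∀ z, C₀ ≤ f z) (n : ℕ) (z : X) :
    C₁ ^ (n / nmax) * C₀ ^ nmax ≤ birkhoffProd φ f n z := by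
  induction n using Nat.strong_induction_on generalizing z with
  | _ n ih =>
  rcases lt_or_ge n nmax with hn | hn
  · calc C₁ ^ (n / nmax) * C₀ ^ nmax = C₀ ^ nmax := by rw [Nat.div_eq_of_lt hn, pow_zero, one_mul]
      _ ≤ C₀ ^ n := pow_le_pow_of_le_one hC₀ hC₀' hn.le
      _ ≤ birkhoffProd φ f n z := pow_le_birkhoffProd hC₀ hf n z
  · set m := nz z
    have hm_pos : 1 ≤ m := hnz_pos z
    have hm_le : m ≤ nmax := hnz_le z
    have hdiv : n / nmax ≤ (n - m) / nmax + 1 := by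
      rw [← Nat.add_div_right _ (hm_pos.trans hm_le)]
      exact Nat.div_le_div_right (by omega)
    have hC₁_nonneg : 0 ≤ C₁ := zero_le_one.trans hC₁
    calc C₁ ^ (n / nmax) * C₀ ^ nmax ≤ C₁ * (C₁ ^ ((n - m) / nmax) * C₀ ^ nmax) := by
          rw [← mul_assoc, ← pow_succ']
          gcongr
      _ ≤ birkhoffProd φ f m z * birkhoffProd φ f (n - m) (φ^[m] z) :=
          mul_le_mul (hblock z) (ih (n - m) (by omega) _)
            (by positivity) (birkhoffProd_nonneg (fun x => hC₀.trans (hf x)) _ _)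
      _ = birkhoffProd φ f n z := by rw [← birkhoffProd_add, Nat.add_sub_cancel' (hm_le.trans hn)]

end

/-- Uniform expansion from variable-block expansion: if along every
orbit there are blocks of bounded length `n_z ≤ n_max` over which the product of `f`
exceeds `C₁ > 1`, and `f > C₀` pointwise with `0 < C₀ < 1`, then for every `λ ≥ 1`
there is `N` such that all orbit products of length `n ≥ N` exceed `λ`. -/
theorem stmt12 {X : Type*} (φ : X → X) (f : X → ℝ) (nz : X → ℕ) (nmax : ℕ)
    (C0 C1 : ℝ) (hC1 : 1 < C1) (hC0 : 0 < C0) (hC0' : C0 < 1)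
    (hn : ∀ z, 1 ≤ nz z ∧ nz z ≤ nmax)
    (hblock : ∀ z, C1 < ∏ i ∈ Finset.range (nz z), f (φ^[i] z))
    (hf : ∀ z, C0 < f z) :
    ∀ lam : ℝ, 1 ≤ lam → ∃ N : ℕ, 1 ≤ N ∧ ∀ z : X, ∀ n : ℕ, N ≤ n →
      lam < ∏ i ∈ Finset.range n, f (φ^[i] z) := by
  intro lam _
  obtain ⟨k, hk⟩ := pow_unbounded_of_one_lt (lam / C0 ^ nmax) hC1
  -- the `+ 1` keeps `N ≥ 1` when `nmax = 0`, i.e. when `X` is empty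
  refine ⟨k * nmax + 1, Nat.le_add_left 1 _, fun z n hN => ?_⟩
  have hnmax : 0 < nmax := (hn z).1.trans (hn z).2
  have hk_le : k ≤ n / nmax := (Nat.le_div_iff_mul_le hnmax).2 (by omega)
  calc lam < C1 ^ k * C0 ^ nmax := (div_lt_iff₀ (by positivity)).1 hk
    _ ≤ C1 ^ (n / nmax) * C0 ^ nmax := by gcongr; exact hC1.le
    _ ≤ birkhoffProd φ f n z :=
      pow_div_mul_pow_le_birkhoffProd hC1.le hC0.le hC0'.le (fun z => (hn z).1)
        (fun z => (hn z).2) (fun z => (hblock z).le) (fun z => (hf z).le) n z
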